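/- Let ξ ∈ ℝ and let x, y ∈ ℤ³ with w = [x,x,y] = -x·J·y·J·x (a symmetric matrix, hence a triple). Then there is a constant C(ξ) with ‖w‖ ≤ C(ξ)·(‖x‖²L(y) + ‖y‖L(x)²) and L(w) ≤ C(ξ)·(‖x‖L(y) + ‖y‖L(x))·L(x). -/

import Mathlib

/-!
Let `z = (1, ξ, ξ²)`, i.e. the rank-one matrix `(1, ξ)ᵀ (1, ξ)`, so that `z J z = 0`. Writing
`x = x₀ z - D` and `y = y₀ z - E`, the defect matrices `D`, `E` have entries of size `L(x)`, `L(y)`,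
and `z J z = 0` kills every term in which `z` meets `z`:
`x J y J x = y₀ D J z J D - x J E J x` and `x J y J x J z = (y₀ D J z + x J E) J D J z`.
The first identity bounds `‖w‖`. The second bounds `L(w)`: the columns of `w J z` are
`(w₀ ξ - w₁, w₁ ξ - w₂)` and `ξ` times it, and `w₀ ξ² - w₂` is a combination of these two numbers.
Submultiplicativity of the `ℓ∞` operator norm on matrices does the rest.
-/

open Matrix

def Jmat : Matrix (Fin 2) (Fin 2) ℤ := !![0, 1; -1, 0]

def toMat (x : Fin 3 → ℤ) : Matrix (Fin 2) (Fin 2) ℤ := !![x 0, x 1; x 1, x 2]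

def ofMat (m : Matrix (Fin 2) (Fin 2) ℤ) : Fin 3 → ℤ := ![m 0 0, m 0 1, m 1 1]

noncomputable def normT (x : Fin 3 → ℤ) : ℝ :=
  max (|(x 0 : ℝ)|) (max (|(x 1 : ℝ)|) (|(x 2 : ℝ)|))

noncomputable def Lf (ξ : ℝ) (x : Fin 3 → ℤ) : ℝ :=
  max (|(x 0 : ℝ) * ξ - (x 1 : ℝ)|) (|(x 0 : ℝ) * ξ ^ 2 - (x 2 : ℝ)|)

section Bracket

variable {R A : Type*} [CommSemiring R] [Ring A] [Algebra R A]
  {z j X Y D E : A} {s t : R}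

theorem mul_mul_eq_neg_of_mul_mul_eq_zero (hz : z * j * z = 0) (hX : X = s • z - D) :
    X * j * z = -(D * j * z) ∧ z * j * X = -(z * j * D) := by
  subst hX
  constructor
  · rw [sub_mul, sub_mul, smul_mul_assoc, smul_mul_assoc, hz, smul_zero, zero_sub]
  · rw [mul_sub, mul_smul_comm, hz, smul_zero, zero_sub]

theorem bracket_eq_of_mul_mul_eq_zero (hz : z * j * z = 0) (hX : X = s • z - D)
    (hY : Y = t • z - E) :
    X * j * Y * j * X = t • (D * j * z * j * D) - X * j * E * j * X := by
  obtain ⟨hXz, hzX⟩ := mul_mul_eq_neg_of_mul_mul_eq_zero hz hX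
  have hXzX : X * j * z * j * X = D * j * z * j * D := by
    calc X * j * z * j * X = -(D * j * (z * j * X)) := by rw [hXz]; noncomm_ring
      _ = D * j * z * j * D := by rw [hzX]; noncomm_ring
  rw [← hXzX, hY, mul_sub, sub_mul, sub_mul, mul_smul_comm, smul_mul_assoc, smul_mul_assoc]

theorem bracket_mul_mul_eq_of_mul_mul_eq_zero (hz : z * j * z = 0) (hX : X = s • z - D)
    (hY : Y = t • z - E) :
    X * j * Y * j * X * j * z = (t • (D * j * z) + X * j * E) * j * D * j * z := by
  obtain ⟨hXz, -⟩ := mul_mul_eq_neg_of_mul_mul_eq_zero hz hX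
  have hXY : X * j * Y = -(t • (D * j * z) + X * j * E) := by
    rw [hY, mul_sub, mul_smul_comm, hXz, smul_neg]; abel
  rw [mul_assoc _ X, mul_assoc _ (X * j), hXz, hXY]
  noncomm_ring

end Bracket

section Norm

variable {𝕜 A : Type*} [NormedField 𝕜] [SeminormedRing A] [NormedAlgebra 𝕜 A]
  {z j X Y D E : A} {s t : 𝕜}

theorem norm_mul₅_le (a b c d e : A) : ‖a * b * c * d * e‖ ≤ ‖a‖ * ‖b‖ * ‖c‖ * ‖d‖ * ‖e‖ :=
  norm_mul_le_of_le (norm_mul_le_of_le norm_mul₃_le le_rfl) le_rfl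

theorem norm_bracket_le (hz : z * j * z = 0) (hX : X = s • z - D) (hY : Y = t • z - E) :
    ‖X * j * Y * j * X‖ ≤ (‖t‖ * ‖D‖ ^ 2 * ‖z‖ + ‖X‖ ^ 2 * ‖E‖) * ‖j‖ ^ 2 := by
  rw [bracket_eq_of_mul_mul_eq_zero hz hX hY]
  calc _ ≤ ‖t‖ * ‖D * j * z * j * D‖ + ‖X * j * E * j * X‖ := by
        rw [← norm_smul]; exact norm_sub_le _ _
    _ ≤ ‖t‖ * (‖D‖ * ‖j‖ * ‖z‖ * ‖j‖ * ‖D‖) + ‖X‖ * ‖j‖ * ‖E‖ * ‖j‖ * ‖X‖ := by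
        gcongr <;> apply norm_mul₅_le
    _ = _ := by ring

theorem norm_bracket_mul_mul_le (hz : z * j * z = 0) (hX : X = s • z - D)
    (hY : Y = t • z - E) :
    ‖X * j * Y * j * X * j * z‖ ≤ (‖t‖ * ‖D‖ * ‖z‖ + ‖X‖ * ‖E‖) * ‖D‖ * ‖z‖ * ‖j‖ ^ 3 := by
  rw [bracket_mul_mul_eq_of_mul_mul_eq_zero hz hX hY]
  calc _ ≤ ‖t • (D * j * z) + X * j * E‖ * ‖j‖ * ‖D‖ * ‖j‖ * ‖z‖ := norm_mul₅_le _ _ _ _ _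
    _ ≤ (‖t‖ * (‖D‖ * ‖j‖ * ‖z‖) + ‖X‖ * ‖j‖ * ‖E‖) * ‖j‖ * ‖D‖ * ‖j‖ * ‖z‖ := by
        gcongr
        calc _ ≤ ‖t • (D * j * z)‖ + ‖X * j * E‖ := norm_add_le _ _
          _ ≤ _ := by rw [norm_smul]; gcongr <;> exact norm_mul₃_le
    _ = _ := by ring

end Norm

theorem Matrix.IsSymm.mul_mul_mul_mul {R : Type*} [CommRing R] {n : Type*} [Fintype n]
    {X Y J : Matrix n n R} (hX : X.IsSymm) (hY : Y.IsSymm) (hJ : Jᵀ = -J) :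
    (X * J * Y * J * X).IsSymm := by
  simp only [IsSymm, transpose_mul, hX.eq, hY.eq, hJ, neg_mul, mul_neg, neg_neg, mul_assoc]

theorem toMat_isSymm (x : Fin 3 → ℤ) : (toMat x).IsSymm := by
  ext i j; fin_cases i <;> fin_cases j <;> rfl

theorem Jmat_transpose : Jmatᵀ = -Jmat := by
  ext i j; fin_cases i <;> fin_cases j <;> rfl

theorem Matrix.map_fin_two {α β : Type*} (f : α → β) (a b c d : α) :
    !![a, b; c, d].map f = !![f a, f b; f c, f d] := by
  ext i j; fin_cases i <;> fin_cases j <;> rfl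

def bracketMat (x y : Fin 3 → ℤ) : Matrix (Fin 2) (Fin 2) ℤ :=
  -(toMat x * Jmat * toMat y * Jmat * toMat x)

theorem bracketMat_isSymm (x y : Fin 3 → ℤ) : (bracketMat x y).IsSymm :=
  ((toMat_isSymm x).mul_mul_mul_mul (toMat_isSymm y) Jmat_transpose).neg

section Veronese

variable {R : Type*} [CommRing R]

def veronese (ξ : R) : Matrix (Fin 2) (Fin 2) R := !![1, ξ; ξ, ξ ^ 2]

def defectMat (ξ : R) (x : Fin 3 → ℤ) : Matrix (Fin 2) (Fin 2) R :=
  !![0, x 0 * ξ - x 1; x 0 * ξ - x 1, x 0 * ξ ^ 2 - x 2]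

theorem Jmat_map : Jmat.map ((↑) : ℤ → R) = !![0, 1; -1, 0] := by
  ext i j; fin_cases i <;> fin_cases j <;> simp [Jmat]

theorem veronese_mul_Jmat_mul_veronese (ξ : R) :
    veronese ξ * Jmat.map (↑) * veronese ξ = 0 := by
  ext i j
  fin_cases i <;> fin_cases j <;> simp [veronese, Jmat_map] <;> ring

theorem toMat_map_eq_smul_veronese_sub (ξ : R) (x : Fin 3 → ℤ) :
    (toMat x).map (↑) = (x 0 : R) • veronese ξ - defectMat ξ x := by
  ext i j
  fin_cases i <;> fin_cases j <;> simp [toMat, veronese, defectMat]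

theorem bracketMat_map (x y : Fin 3 → ℤ) :
    (bracketMat x y).map ((↑) : ℤ → R) =
      -((toMat x).map (↑) * Jmat.map (↑) * (toMat y).map (↑) * Jmat.map (↑) *
        (toMat x).map (↑)) := by
  change (Int.castRingHom R).mapMatrix _ = _
  simp only [bracketMat, map_neg, map_mul, RingHom.mapMatrix_apply, Int.coe_castRingHom]

end Veronese

theorem normT_nonneg (x : Fin 3 → ℤ) : 0 ≤ normT x := (abs_nonneg _).trans (le_max_left _ _)

theorem Lf_nonneg (ξ : ℝ) (x : Fin 3 → ℤ) : 0 ≤ Lf ξ x := (abs_nonneg _).trans (le_max_left _ _)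

section LinftyNorm

attribute [local instance] Matrix.linftyOpSeminormedAddCommGroup
  Matrix.linftyOpNormedAddCommGroup Matrix.linftyOpNormedRing Matrix.linftyOpNormedAlgebra

theorem Matrix.linfty_opNorm_fin_two {α : Type*} [SeminormedAddCommGroup α] (a b c d : α) :
    ‖!![a, b; c, d]‖ = max (‖a‖ + ‖b‖) (‖c‖ + ‖d‖) := by
  rw [linfty_opNorm_def]
  simp [Fin.univ_succ]

theorem normT_ofMat_le (W : Matrix (Fin 2) (Fin 2) ℤ) :
    normT (ofMat W) ≤ ‖W.map ((↑) : ℤ → ℝ)‖ := by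
  obtain ⟨a, b, c, d, rfl⟩ : ∃ a b c d, W = !![a, b; c, d] := ⟨_, _, _, _, eta_fin_two W⟩
  rw [map_fin_two, linfty_opNorm_fin_two]
  simp only [normT, ofMat, Real.norm_eq_abs, of_apply, cons_val', cons_val_zero, cons_val_one,
    cons_val_two, empty_val', cons_val_fin_one, head_cons, tail_cons]
  have := abs_nonneg (a : ℝ); have := abs_nonneg (b : ℝ); have := abs_nonneg (c : ℝ)
  exact max_le (le_max_of_le_left (by linarith))
    (max_le (le_max_of_le_left (by linarith)) (le_max_of_le_right (by linarith)))

theorem Lf_ofMat_le (ξ : ℝ) {W : Matrix (Fin 2) (Fin 2) ℤ} (hW : W.IsSymm) :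
    Lf ξ (ofMat W) ≤ ‖W.map (↑) * Jmat.map (↑) * veronese ξ‖ := by
  obtain ⟨a, b, d, rfl⟩ : ∃ a b d, W = !![a, b; b, d] :=
    ⟨W 0 0, W 0 1, W 1 1, (eta_fin_two W).trans (by rw [hW.apply 0 1])⟩
  set A : ℝ := a * ξ - b
  set B : ℝ := b * ξ - d
  have hprod : !![a, b; b, d].map ((↑) : ℤ → ℝ) * Jmat.map (↑) * veronese ξ =
      !![A, A * ξ; B, B * ξ] := by
    ext i j; fin_cases i <;> fin_cases j <;> simp [A, B, Jmat_map, veronese, map_fin_two] <;> ring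
  have hA : |A| ≤ |A| + |A| * |ξ| := by nlinarith [abs_nonneg A, abs_nonneg ξ]
  have hsplit : (a : ℝ) * ξ ^ 2 - d = ξ * A + B := by ring
  rw [hprod, linfty_opNorm_fin_two]
  simp only [Lf, ofMat, Real.norm_eq_abs, abs_mul, of_apply, cons_val', cons_val_zero,
    cons_val_one, cons_val_two, empty_val', cons_val_fin_one, head_cons, tail_cons, hsplit]
  refine max_le (le_max_of_le_left hA) ((abs_add_le _ _).trans ?_)
  rw [abs_mul]
  rcases le_total |A| |B| with h | h
  · exact le_max_of_le_right (by nlinarith [abs_nonneg ξ])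
  · exact le_max_of_le_left (by nlinarith [abs_nonneg ξ])

theorem norm_toMat_map_le (x : Fin 3 → ℤ) : ‖(toMat x).map ((↑) : ℤ → ℝ)‖ ≤ 2 * normT x := by
  have h0 : |(x 0 : ℝ)| ≤ normT x := le_max_left _ _
  have h1 : |(x 1 : ℝ)| ≤ normT x := (le_max_left _ _).trans (le_max_right _ _)
  have h2 : |(x 2 : ℝ)| ≤ normT x := (le_max_right _ _).trans (le_max_right _ _)
  rw [toMat, map_fin_two, linfty_opNorm_fin_two]
  simp only [Real.norm_eq_abs]
  exact max_le (by linarith) (by linarith)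

theorem norm_defectMat_le (ξ : ℝ) (x : Fin 3 → ℤ) : ‖defectMat ξ x‖ ≤ 2 * Lf ξ x := by
  have h1 : |(x 0 : ℝ) * ξ - x 1| ≤ Lf ξ x := le_max_left _ _
  have h2 : |(x 0 : ℝ) * ξ ^ 2 - x 2| ≤ Lf ξ x := le_max_right _ _
  rw [defectMat, linfty_opNorm_fin_two]
  simp only [Real.norm_eq_abs, abs_zero]
  exact max_le (by linarith [abs_nonneg ((x 0 : ℝ) * ξ - x 1)]) (by linarith)

theorem norm_veronese_le (ξ : ℝ) : ‖veronese ξ‖ ≤ (1 + |ξ|) ^ 2 := by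
  rw [veronese, linfty_opNorm_fin_two]
  simp only [Real.norm_eq_abs, abs_one, abs_pow, sq_abs]
  have := abs_nonneg ξ
  exact max_le (by nlinarith) (by nlinarith [sq_abs ξ])

theorem norm_Jmat_map : ‖Jmat.map ((↑) : ℤ → ℝ)‖ = 1 := by
  simp [Jmat_map, linfty_opNorm_fin_two]

theorem normT_bracketMat_le (ξ : ℝ) (x y : Fin 3 → ℤ) :
    normT (ofMat (bracketMat x y)) ≤
      8 * (1 + |ξ|) ^ 2 * (normT x ^ 2 * Lf ξ y + normT y * Lf ξ x ^ 2) := by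
  have hy0 : |(y 0 : ℝ)| ≤ normT y := le_max_left _ _
  have hNx := normT_nonneg x
  have hNy := normT_nonneg y
  have hLx := Lf_nonneg ξ x
  have hLy := Lf_nonneg ξ y
  calc normT (ofMat (bracketMat x y)) ≤ ‖(bracketMat x y).map ((↑) : ℤ → ℝ)‖ := normT_ofMat_le _
    _ ≤ (‖(y 0 : ℝ)‖ * ‖defectMat ξ x‖ ^ 2 * ‖veronese ξ‖ +
          ‖(toMat x).map ((↑) : ℤ → ℝ)‖ ^ 2 * ‖defectMat ξ y‖) * ‖Jmat.map ((↑) : ℤ → ℝ)‖ ^ 2 := by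
        rw [bracketMat_map, norm_neg]
        exact norm_bracket_le (veronese_mul_Jmat_mul_veronese ξ)
          (toMat_map_eq_smul_veronese_sub ξ x) (toMat_map_eq_smul_veronese_sub ξ y)
    _ ≤ normT y * (2 * Lf ξ x) ^ 2 * (1 + |ξ|) ^ 2 + (2 * normT x) ^ 2 * (2 * Lf ξ y) := by
        rw [norm_Jmat_map, one_pow, mul_one, Real.norm_eq_abs]
        gcongr
        exacts [norm_defectMat_le ξ x, norm_veronese_le ξ, norm_toMat_map_le x,
          norm_defectMat_le ξ y]
    _ ≤ _ := by
        have hK : 1 ≤ (1 + |ξ|) ^ 2 := one_le_pow₀ (le_add_of_nonneg_right (abs_nonneg ξ))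
        nlinarith [mul_nonneg (sub_nonneg.2 hK) (by positivity : 0 ≤ normT x ^ 2 * Lf ξ y),
          mul_nonneg (by positivity : (0 : ℝ) ≤ (1 + |ξ|) ^ 2)
            (by positivity : 0 ≤ normT y * Lf ξ x ^ 2)]

theorem Lf_bracketMat_le (ξ : ℝ) (x y : Fin 3 → ℤ) :
    Lf ξ (ofMat (bracketMat x y)) ≤
      8 * (1 + |ξ|) ^ 4 * (normT x * Lf ξ y + normT y * Lf ξ x) * Lf ξ x := by
  have hy0 : |(y 0 : ℝ)| ≤ normT y := le_max_left _ _
  have hNx := normT_nonneg x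
  have hNy := normT_nonneg y
  have hLx := Lf_nonneg ξ x
  have hLy := Lf_nonneg ξ y
  calc Lf ξ (ofMat (bracketMat x y))
      ≤ ‖(bracketMat x y).map ((↑) : ℤ → ℝ) * Jmat.map (↑) * veronese ξ‖ :=
        Lf_ofMat_le ξ (bracketMat_isSymm x y)
    _ ≤ (‖(y 0 : ℝ)‖ * ‖defectMat ξ x‖ * ‖veronese ξ‖ +
          ‖(toMat x).map ((↑) : ℤ → ℝ)‖ * ‖defectMat ξ y‖) * ‖defectMat ξ x‖ * ‖veronese ξ‖ *
          ‖Jmat.map ((↑) : ℤ → ℝ)‖ ^ 3 := by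
        rw [bracketMat_map, neg_mul, neg_mul, norm_neg]
        exact norm_bracket_mul_mul_le (veronese_mul_Jmat_mul_veronese ξ)
          (toMat_map_eq_smul_veronese_sub ξ x) (toMat_map_eq_smul_veronese_sub ξ y)
    _ ≤ (normT y * (2 * Lf ξ x) * (1 + |ξ|) ^ 2 + 2 * normT x * (2 * Lf ξ y)) *
          (2 * Lf ξ x) * (1 + |ξ|) ^ 2 := by
        rw [norm_Jmat_map, one_pow, mul_one, Real.norm_eq_abs]
        gcongr
        exacts [norm_defectMat_le ξ x, norm_veronese_le ξ, norm_toMat_map_le x,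
          norm_defectMat_le ξ y, norm_defectMat_le ξ x, norm_veronese_le ξ]
    _ ≤ _ := by
        have hK : (1 + |ξ|) ^ 2 ≤ (1 + |ξ|) ^ 4 :=
          pow_le_pow_right₀ (le_add_of_nonneg_right (abs_nonneg ξ)) (by norm_num)
        nlinarith [mul_nonneg (sub_nonneg.2 hK) (by positivity : 0 ≤ normT x * Lf ξ y * Lf ξ x),
          mul_nonneg (by positivity : (0 : ℝ) ≤ (1 + |ξ|) ^ 4)
            (by positivity : 0 ≤ normT y * Lf ξ x * Lf ξ x)]

end LinftyNorm

theorem bracket_estimate (ξ : ℝ) :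
    ∃ C : ℝ, 0 < C ∧ ∀ x y : Fin 3 → ℤ,
      normT (ofMat (-(toMat x * Jmat * toMat y * Jmat * toMat x))) ≤
          C * (normT x ^ 2 * Lf ξ y + normT y * Lf ξ x ^ 2) ∧
        Lf ξ (ofMat (-(toMat x * Jmat * toMat y * Jmat * toMat x))) ≤
          C * (normT x * Lf ξ y + normT y * Lf ξ x) * Lf ξ x := by
  refine ⟨8 * (1 + |ξ|) ^ 4, by positivity, fun x y => ⟨?_, Lf_bracketMat_le ξ x y⟩⟩
  have hS : 0 ≤ normT x ^ 2 * Lf ξ y + normT y * Lf ξ x ^ 2 := by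
    have := normT_nonneg y; have := Lf_nonneg ξ y; positivity
  have hK : (1 + |ξ|) ^ 2 ≤ (1 + |ξ|) ^ 4 :=
    pow_le_pow_right₀ (le_add_of_nonneg_right (abs_nonneg ξ)) (by norm_num)
  exact (normT_bracketMat_le ξ x y).trans (by gcongr)
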